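/- Under Assumptions 1, 2 and 3, for any c=(c₁,c₂)∈ℤ₊² with c≠(0,0) and for every (x,j)∈𝕊₊, j'∈S₀ and l₁,l₂∈ℤ₊, limsup_{k→∞} (1/k) log q̃_{(x,j),(kc₁+l₁, kc₂+l₂, j')} ≤ − sup_{θ∈𝒟_x} ⟨θ,c⟩, where ⟨·,·⟩ is the Euclidean inner product. -/

import Mathlib

open scoped ENNReal

namespace MMRW2d

/-! ## General kernels over a countable index set, with entries in `ℝ≥0∞` -/

/-- Kernel (infinite matrix) multiplication over `ℝ≥0∞`. -/
noncomputable def kmul {α : Type*} (p q : α → α → ℝ≥0∞) : α → α → ℝ≥0∞ :=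
  fun i j => ∑' k, p i k * q k j

/-- `n`-step kernel power. -/
noncomputable def kpow {α : Type*} [DecidableEq α] (p : α → α → ℝ≥0∞) : ℕ → α → α → ℝ≥0∞
  | 0 => fun i j => if i = j then 1 else 0
  | n + 1 => kmul p (kpow p n)

/-- Convergence parameter `cp(A) = sup{r ≥ 0 : Σ_n rⁿ Aⁿ < ∞ entrywise}`. -/
noncomputable def cp {α : Type*} [DecidableEq α] (p : α → α → ℝ≥0∞) : ℝ≥0∞ :=
  sSup {r : ℝ≥0∞ | ∀ i j, (∑' n : ℕ, r ^ n * kpow p n i j) ≠ ⊤}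

/-- `R` is the minimal nonnegative solution of `R = R² A₋₁ + R A₀ + A₁`. -/
def IsMinimalSolution {κ : Type*} (Am A0 Ap R : κ → κ → ℝ≥0∞) : Prop :=
  (∀ i j, R i j = kmul (kmul R R) Am i j + kmul R A0 i j + Ap i j) ∧
  ∀ S : κ → κ → ℝ≥0∞,
    (∀ i j, S i j = kmul (kmul S S) Am i j + kmul S A0 i j + Ap i j) → ∀ i j, R i j ≤ S i j

variable {s₀ : ℕ}

/-! ## The 2d skip-free Markov-modulated random walk -/

/-- The defining data of a 2d-MMRW: the blocks `A_{i,j}` are nonnegative, vanish outside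
`i,j ∈ {-1,0,1}`, and `Σ_{i,j} A_{i,j}` is stochastic. -/
structure IsMMRW (A : ℤ → ℤ → Matrix (Fin s₀) (Fin s₀) ℝ) : Prop where
  nonneg : ∀ i j a b, 0 ≤ A i j a b
  skipfree : ∀ i j : ℤ, (i ∉ Finset.Icc (-1 : ℤ) 1 ∨ j ∉ Finset.Icc (-1 : ℤ) 1) → A i j = 0
  stochastic : ∀ a, ∑ i ∈ Finset.Icc (-1 : ℤ) 1, ∑ j ∈ Finset.Icc (-1 : ℤ) 1, ∑ b, A i j a b = 1

/-- The transition kernel of the 2d-MMRW `{Y_n}` on `𝕊 = ℤ² × S₀`. -/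
noncomputable def ker (A : ℤ → ℤ → Matrix (Fin s₀) (Fin s₀) ℝ) :
    (ℤ × ℤ × Fin s₀) → (ℤ × ℤ × Fin s₀) → ℝ≥0∞ :=
  fun y y' => ENNReal.ofReal (A (y'.1 - y.1) (y'.2.1 - y.2.1) y.2.2 y'.2.2)

/-- The substochastic kernel `P₊`, the restriction of `P` to `𝕊₊ = ℤ₊² × S₀`. -/
noncomputable def kerPlus (A : ℤ → ℤ → Matrix (Fin s₀) (Fin s₀) ℝ) :
    (ℕ × ℕ × Fin s₀) → (ℕ × ℕ × Fin s₀) → ℝ≥0∞ :=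
  fun y y' =>
    ENNReal.ofReal (A ((y'.1 : ℤ) - (y.1 : ℤ)) ((y'.2.1 : ℤ) - (y.2.1 : ℤ)) y.2.2 y'.2.2)

/-- The occupation measure: `q̃_{y,y'} = E[Σ_{n<τ} 1(Y_n = y') | Y₀ = y] = Σ_n [P₊ⁿ]_{y,y'}`,
the `(y,y')` entry of the fundamental matrix of `P₊`. -/
noncomputable def occ (A : ℤ → ℤ → Matrix (Fin s₀) (Fin s₀) ℝ) (y y' : ℕ × ℕ × Fin s₀) :
    ℝ≥0∞ :=
  ∑' n : ℕ, kpow (kerPlus A) n y y'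

/-- The expected exit time `E(τ | Y₀ = y) = Σ_{n≥0} P(τ > n | Y₀ = y)
= Σ_n Σ_{y'∈𝕊₊} [P₊ⁿ]_{y,y'}`. -/
noncomputable def Etau (A : ℤ → ℤ → Matrix (Fin s₀) (Fin s₀) ℝ) (y : ℕ × ℕ × Fin s₀) : ℝ≥0∞ :=
  ∑' n : ℕ, ∑' y' : ℕ × ℕ × Fin s₀, kpow (kerPlus A) n y y'

/-- Assumption 1: `{Y_n}` is irreducible and aperiodic (equivalently, primitive). -/
def Assumption1 (A : ℤ → ℤ → Matrix (Fin s₀) (Fin s₀) ℝ) : Prop :=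
  ∀ y y' : ℤ × ℤ × Fin s₀, ∃ N : ℕ, ∀ n ≥ N, 0 < kpow (ker A) n y y'

/-- Assumption 3: the substochastic matrix `P₊` is irreducible. -/
def Assumption3 (A : ℤ → ℤ → Matrix (Fin s₀) (Fin s₀) ℝ) : Prop :=
  ∀ y y' : ℕ × ℕ × Fin s₀, ∃ n : ℕ, 1 ≤ n ∧ 0 < kpow (kerPlus A) n y y'

/-- Mean drift `a₁ = π_{*,*}(−A_{−1,*}+A_{1,*})𝟏` in the first coordinate. -/
noncomputable def a1 (A : ℤ → ℤ → Matrix (Fin s₀) (Fin s₀) ℝ) (π : Fin s₀ → ℝ) : ℝ :=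
  ∑ a, π a * ∑ b, ∑ k ∈ Finset.Icc (-1 : ℤ) 1, (A 1 k a b - A (-1) k a b)

/-- Mean drift `a₂ = π_{*,*}(−A_{*,−1}+A_{*,1})𝟏` in the second coordinate. -/
noncomputable def a2 (A : ℤ → ℤ → Matrix (Fin s₀) (Fin s₀) ℝ) (π : Fin s₀ → ℝ) : ℝ :=
  ∑ a, π a * ∑ b, ∑ k ∈ Finset.Icc (-1 : ℤ) 1, (A k 1 a b - A k (-1) a b)

/-- `π` is the stationary distribution of the stochastic matrix `A_{*,*} = Σ_{i,j} A_{i,j}`. -/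
def IsStationary (A : ℤ → ℤ → Matrix (Fin s₀) (Fin s₀) ℝ) (π : Fin s₀ → ℝ) : Prop :=
  (∀ a, 0 ≤ π a) ∧ (∑ a, π a = 1) ∧
    ∀ b, (∑ a, π a * ∑ i ∈ Finset.Icc (-1 : ℤ) 1, ∑ j ∈ Finset.Icc (-1 : ℤ) 1, A i j a b) = π b

/-- Assumption 2: `a₁ < 0` or `a₂ < 0`. -/
def Assumption2 (A : ℤ → ℤ → Matrix (Fin s₀) (Fin s₀) ℝ) : Prop :=
  ∃ π : Fin s₀ → ℝ, IsStationary A π ∧ (a1 A π < 0 ∨ a2 A π < 0)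

/-! ## Spectral radius and the sets Γ, Γ̄, 𝒟 -/

/-- Spectral radius (maximum modulus of the eigenvalues) of a complex matrix. -/
noncomputable def sprC (M : Matrix (Fin s₀) (Fin s₀) ℂ) : ℝ :=
  sSup ((fun z => ‖z‖) '' spectrum ℂ M)

/-- The matrix moment generating function `A_{*,*}(θ₁,θ₂) = Σ_{i,j} e^{iθ₁+jθ₂} A_{i,j}`. -/
noncomputable def Ass (A : ℤ → ℤ → Matrix (Fin s₀) (Fin s₀) ℝ) (θ₁ θ₂ : ℝ) :
    Matrix (Fin s₀) (Fin s₀) ℝ :=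
  ∑ i ∈ Finset.Icc (-1 : ℤ) 1, ∑ j ∈ Finset.Icc (-1 : ℤ) 1,
    Real.exp ((i : ℝ) * θ₁ + (j : ℝ) * θ₂) • A i j

/-- `χ(θ₁,θ₂) = spr(A_{*,*}(θ₁,θ₂))`. -/
noncomputable def chi (A : ℤ → ℤ → Matrix (Fin s₀) (Fin s₀) ℝ) (θ₁ θ₂ : ℝ) : ℝ :=
  sprC ((Ass A θ₁ θ₂).map Complex.ofReal)

/-- `Γ = {(θ₁,θ₂) : spr(A_{*,*}(θ₁,θ₂)) < 1}`. -/
def GammaSet (A : ℤ → ℤ → Matrix (Fin s₀) (Fin s₀) ℝ) : Set (ℝ × ℝ) :=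
  {θ | chi A θ.1 θ.2 < 1}

/-- `Γ̄ = {(θ₁,θ₂) : spr(A_{*,*}(θ₁,θ₂)) ≤ 1}`. -/
def GammaBar (A : ℤ → ℤ → Matrix (Fin s₀) (Fin s₀) ℝ) : Set (ℝ × ℝ) :=
  {θ | chi A θ.1 θ.2 ≤ 1}

/-- `𝒟 = {θ : θ < θ' componentwise for some θ' ∈ Γ}`. -/
def Dset (A : ℤ → ℤ → Matrix (Fin s₀) (Fin s₀) ℝ) : Set (ℝ × ℝ) :=
  {θ | ∃ θ' ∈ GammaSet A, θ.1 < θ'.1 ∧ θ.2 < θ'.2}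

/-! ## Moment generating function of the occupation measures and its domain -/

/-- `(j,j')`-entry of `Φ_x(θ₁,θ₂) = Σ_{k₁,k₂≥0} e^{k₁θ₁+k₂θ₂} N_{x,(k₁,k₂)}`. -/
noncomputable def Phi (A : ℤ → ℤ → Matrix (Fin s₀) (Fin s₀) ℝ) (x : ℕ × ℕ) (θ : ℝ × ℝ)
    (j j' : Fin s₀) : ℝ≥0∞ :=
  ∑' k : ℕ × ℕ, ENNReal.ofReal (Real.exp ((k.1 : ℝ) * θ.1 + (k.2 : ℝ) * θ.2)) *
    occ A (x.1, x.2, j) (k.1, k.2, j')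

/-- `𝒟_x`: the interior of the set where `Φ_x` is (entrywise) finite. -/
noncomputable def domPhi (A : ℤ → ℤ → Matrix (Fin s₀) (Fin s₀) ℝ) (x : ℕ × ℕ) : Set (ℝ × ℝ) :=
  interior {θ : ℝ × ℝ | ∀ j j', Phi A x θ j j' ≠ ⊤}

/-! ## QBD blocks and rate matrices -/

/-- Block `A^{(1)}_i`: matrix indexed by `ℤ₊ × S₀`, block tridiagonal with blocks `A_{i,·}`. -/
noncomputable def A1blk (A : ℤ → ℤ → Matrix (Fin s₀) (Fin s₀) ℝ) (i : ℤ) :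
    (ℕ × Fin s₀) → (ℕ × Fin s₀) → ℝ≥0∞ :=
  fun y y' => ENNReal.ofReal (A i ((y'.1 : ℤ) - (y.1 : ℤ)) y.2 y'.2)

/-- Block `A^{(2)}_i`: matrix indexed by `ℤ₊ × S₀`, block tridiagonal with blocks `A_{·,i}`. -/
noncomputable def A2blk (A : ℤ → ℤ → Matrix (Fin s₀) (Fin s₀) ℝ) (i : ℤ) :
    (ℕ × Fin s₀) → (ℕ × Fin s₀) → ℝ≥0∞ :=
  fun y y' => ENNReal.ofReal (A ((y'.1 : ℤ) - (y.1 : ℤ)) i y.2 y'.2)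

/-- Block `A^{(1,1)}_d`, indexed by the phase space `ℤ × S₀` of the QBD representation with
level `min{X₁,X₂}` and phase `(X₁−X₂, J)`: from a state with phase `k`, a jump `(i,l)` moves
the phase to `k+i−l` and the level by `min(max(k,0)+i, max(−k,0)+l)`. -/
noncomputable def A11blk (A : ℤ → ℤ → Matrix (Fin s₀) (Fin s₀) ℝ) (d : ℤ) :
    (ℤ × Fin s₀) → (ℤ × Fin s₀) → ℝ≥0∞ :=
  fun y y' => ∑ i ∈ Finset.Icc (-1 : ℤ) 1, ∑ l ∈ Finset.Icc (-1 : ℤ) 1,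
    if y'.1 = y.1 + i - l ∧ d = min (max y.1 0 + i) (max (-y.1) 0 + l) then
      ENNReal.ofReal (A i l y.2 y'.2) else 0

/-! ## Radii of convergence of the generating functions of the occupation measures -/

/-- Radius of convergence `r^{(1)}_{y,(x₂',j')}` of `Σ_k q̃_{y,(k,x₂',j')} z^k`. -/
noncomputable def r1 (A : ℤ → ℤ → Matrix (Fin s₀) (Fin s₀) ℝ) (y : ℕ × ℕ × Fin s₀)
    (x₂' : ℕ) (j' : Fin s₀) : ℝ≥0∞ :=
  sSup {r : ℝ≥0∞ | (∑' k : ℕ, r ^ k * occ A y (k, x₂', j')) ≠ ⊤}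

/-- Radius of convergence `r^{(2)}_{y,(x₁',j')}` of `Σ_k q̃_{y,(x₁',k,j')} z^k`. -/
noncomputable def r2 (A : ℤ → ℤ → Matrix (Fin s₀) (Fin s₀) ℝ) (y : ℕ × ℕ × Fin s₀)
    (x₁' : ℕ) (j' : Fin s₀) : ℝ≥0∞ :=
  sSup {r : ℝ≥0∞ | (∑' k : ℕ, r ^ k * occ A y (x₁', k, j')) ≠ ⊤}

/-- Radius of convergence `r^{(1,1)}_{(k,j),(k',j')}` of
`φ̂^{(1,1)}_{(k,j),(k',j')}(z) = Σ_l q̃_{(k∨0,−(k∧0),j),(l+(k'∨0),l−(k'∧0),j')} z^l`. -/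
noncomputable def r11 (A : ℤ → ℤ → Matrix (Fin s₀) (Fin s₀) ℝ) (k : ℤ) (j : Fin s₀)
    (k' : ℤ) (j' : Fin s₀) : ℝ≥0∞ :=
  sSup {r : ℝ≥0∞ | (∑' l : ℕ,
    r ^ l * occ A ((max k 0).toNat, (-(min k 0)).toNat, j)
      (l + (max k' 0).toNat, l + (-(min k' 0)).toNat, j')) ≠ ⊤}

/-! ## The complex matrix function Ĉ(z,w) -/

/-- `Ĉ(z,w) = Σ_{i,j∈{−1,0,1}} zⁱ wʲ A_{i,j}` as a complex matrix. -/
noncomputable def Chat (A : ℤ → ℤ → Matrix (Fin s₀) (Fin s₀) ℝ) (z w : ℂ) :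
    Matrix (Fin s₀) (Fin s₀) ℂ :=
  ∑ i ∈ Finset.Icc (-1 : ℤ) 1, ∑ j ∈ Finset.Icc (-1 : ℤ) 1,
    (z ^ i * w ^ j) • (A i j).map Complex.ofReal

/-! ## The lifted chain `ᶜY` (quotients and remainders mod `c`) -/

/-- The block `ᶜA_{i,j}` of the lifted 2d-MMRW, expressed via the original blocks:
`ᶜA_{i,j}((m₁,m₂,a),(m₁',m₂',b)) = A_{c₁ i + (m₁'−m₁), c₂ j + (m₂'−m₂)}(a,b)`. -/
noncomputable def cA (A : ℤ → ℤ → Matrix (Fin s₀) (Fin s₀) ℝ) (c₁ c₂ : ℕ) (i j : ℤ) :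
    Matrix (Fin c₁ × Fin c₂ × Fin s₀) (Fin c₁ × Fin c₂ × Fin s₀) ℝ :=
  Matrix.of fun y y' =>
    A ((c₁ : ℤ) * i + (((y'.1 : ℕ) : ℤ) - ((y.1 : ℕ) : ℤ)))
      ((c₂ : ℤ) * j + (((y'.2.1 : ℕ) : ℤ) - ((y.2.1 : ℕ) : ℤ))) y.2.2 y'.2.2

/-- `ᶜA_{*,*}(θ₁,θ₂) = Σ_{i,j} e^{iθ₁+jθ₂} ᶜA_{i,j}`. -/
noncomputable def cAss (A : ℤ → ℤ → Matrix (Fin s₀) (Fin s₀) ℝ) (c₁ c₂ : ℕ) (θ₁ θ₂ : ℝ) :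
    Matrix (Fin c₁ × Fin c₂ × Fin s₀) (Fin c₁ × Fin c₂ × Fin s₀) ℝ :=
  ∑ i ∈ Finset.Icc (-1 : ℤ) 1, ∑ j ∈ Finset.Icc (-1 : ℤ) 1,
    Real.exp ((i : ℝ) * θ₁ + (j : ℝ) * θ₂) • cA A c₁ c₂ i j

/-! `Φ_x(θ)_{j,j'}` dominates its term `e^{⟨θ, kc + l⟩} q̃_k`, so `log q̃_k ≤ C_θ - k ⟨θ, c⟩` for
every `θ ∈ 𝒟_x`. Assumption 3 gives a path from `(x, j)` to `(l, j')` and a loop from `(l, j')` to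
`(l + c, j')`; by translation invariance of `P₊` the loop can be repeated, so `q̃_k ≥ δ₁ δ^k` and
`(1/k) log q̃_k` is bounded below (otherwise its `limsup` would be a junk value). It remains to see
that `𝒟_x ≠ ∅`, as otherwise the supremum is the junk value `sSup ∅ = 0`. This is a
Foster–Lyapunov argument: the Poisson equation for the irreducible phase matrix `A_{*,*}`
(Assumption 1) turns the negative mean drift of Assumption 2 into `θ`, `h > 0` and `r < 1` with
`A_{*,*}(θ) h ≤ r h`, so that `z ↦ e^{⟨θ, z⟩} h(z₃)` is `r`-superharmonic for `P₊` and `Φ_x` is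
finite on a quadrant. -/

section Kernel

variable {α : Type*} [DecidableEq α] (p : α → α → ℝ≥0∞)

lemma kpow_succ_apply (n : ℕ) (i j : α) :
    kpow p (n + 1) i j = ∑' k, p i k * kpow p n k j := rfl

lemma kpow_add (m n : ℕ) (i j : α) :
    kpow p (m + n) i j = ∑' k, kpow p m i k * kpow p n k j := by
  induction m generalizing i with
  | zero => simp [kpow, ite_mul]
  | succ m ih =>
    simp only [Nat.add_right_comm m 1 n, kpow_succ_apply, ih, ← ENNReal.tsum_mul_left,
      ← ENNReal.tsum_mul_right, mul_assoc]
    exact ENNReal.tsum_comm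

lemma kpow_mul_le (m n : ℕ) (i k j : α) :
    kpow p m i k * kpow p n k j ≤ kpow p (m + n) i j :=
  (kpow_add p m n i j).symm ▸ ENNReal.le_tsum k

lemma kpow_le_kpow_of_injective {σ : α → α} (hσ : σ.Injective)
    (hp : ∀ i j, p i j ≤ p (σ i) (σ j)) (n : ℕ) (i j : α) :
    kpow p n i j ≤ kpow p n (σ i) (σ j) := by
  induction n generalizing i with
  | zero => simp [kpow, hσ.eq_iff]
  | succ n ih =>
    calc kpow p (n + 1) i j ≤ ∑' k, p (σ i) (σ k) * kpow p n (σ k) (σ j) :=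
          ENNReal.tsum_le_tsum fun k => mul_le_mul' (hp i k) (ih k)
      _ ≤ kpow p (n + 1) (σ i) (σ j) :=
          ENNReal.tsum_comp_le_tsum_of_injective hσ fun k => p (σ i) k * kpow p n k (σ j)

lemma tsum_kpow_mul_le {W : α → ℝ≥0∞} {r : ℝ≥0∞} (hW : ∀ i, ∑' j, p i j * W j ≤ r * W i)
    (n : ℕ) (i : α) : ∑' j, kpow p n i j * W j ≤ r ^ n * W i := by
  induction n generalizing i with
  | zero => simp [kpow, ite_mul]
  | succ n ih =>
    calc ∑' j, kpow p (n + 1) i j * W j = ∑' k, p i k * ∑' j, kpow p n k j * W j := by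
          simp only [kpow_succ_apply, ← ENNReal.tsum_mul_left, ← ENNReal.tsum_mul_right,
            mul_assoc]
          exact ENNReal.tsum_comm
      _ ≤ ∑' k, p i k * (r ^ n * W k) := ENNReal.tsum_le_tsum fun k => mul_le_mul' le_rfl (ih k)
      _ = r ^ n * ∑' k, p i k * W k := by
          rw [← ENNReal.tsum_mul_left]; exact tsum_congr fun k => by ring
      _ ≤ r ^ n * (r * W i) := mul_le_mul' le_rfl (hW i)
      _ = r ^ (n + 1) * W i := by ring

lemma tsum_tsum_kpow_mul_le {W : α → ℝ≥0∞} {r : ℝ≥0∞}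
    (hW : ∀ i, ∑' j, p i j * W j ≤ r * W i) (i : α) :
    ∑' j, (∑' n, kpow p n i j) * W j ≤ (1 - r)⁻¹ * W i :=
  calc ∑' j, (∑' n, kpow p n i j) * W j = ∑' n, ∑' j, kpow p n i j * W j := by
        simp only [← ENNReal.tsum_mul_right]; exact ENNReal.tsum_comm
    _ ≤ ∑' n, r ^ n * W i := ENNReal.tsum_le_tsum (tsum_kpow_mul_le p hW · i)
    _ = (1 - r)⁻¹ * W i := by rw [ENNReal.tsum_mul_right, ENNReal.tsum_geometric]

end Kernel

section StochasticMatrix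

open Matrix

variable {ι : Type*} [Fintype ι] [DecidableEq ι] {M : Matrix ι ι ℝ}

lemma pow_mulVec_eq_self {v : ι → ℝ} (hv : M *ᵥ v = v) (n : ℕ) : (M ^ n) *ᵥ v = v := by
  induction n with
  | zero => simp
  | succ n ih => rw [pow_succ, ← mulVec_mulVec, hv, ih]

lemma eq_of_mulVec_eq_self (hM : M ∈ rowStochastic ℝ ι) (hirr : ∀ a b, ∃ n, 0 < (M ^ n) a b)
    {v : ι → ℝ} (hv : M *ᵥ v = v) (a b : ι) : v a = v b := by
  obtain ⟨a₀, -, hmax⟩ := Finset.exists_max_image Finset.univ v ⟨a, Finset.mem_univ a⟩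
  suffices h : ∀ b, v b = v a₀ by rw [h a, h b]
  intro b
  obtain ⟨n, hn⟩ := hirr a₀ b
  have hMn := pow_mem hM n
  have hsum : ∑ k, (M ^ n) a₀ k * (v a₀ - v k) = 0 := by
    have := congrFun (pow_mulVec_eq_self hv n) a₀
    simp only [mulVec, dotProduct] at this
    simp [mul_sub, Finset.sum_sub_distrib, ← Finset.sum_mul,
      sum_row_of_mem_rowStochastic hMn, this]
  have hb := (Finset.sum_eq_zero_iff_of_nonneg fun k _ => mul_nonneg
    (nonneg_of_mem_rowStochastic hMn) (sub_nonneg.2 (hmax k (Finset.mem_univ k)))).1 hsum b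
    (Finset.mem_univ b)
  linarith [(mul_eq_zero.1 hb).resolve_left hn.ne']

lemma ker_mulVecLin_one_sub (hM : M ∈ rowStochastic ℝ ι)
    (hirr : ∀ a b, ∃ n, 0 < (M ^ n) a b) [Nonempty ι] :
    LinearMap.ker (mulVecLin (1 - M)) = Submodule.span ℝ {1} := by
  refine le_antisymm (fun v hv => ?_) ?_
  · have hv : M *ᵥ v = v := by
      simpa [sub_mulVec, sub_eq_zero, eq_comm] using hv
    obtain ⟨a⟩ := ‹Nonempty ι›
    exact Submodule.mem_span_singleton.2
      ⟨v a, funext fun b => by simp [eq_of_mulVec_eq_self hM hirr hv a b]⟩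
  · simp [Submodule.span_le, one_vecMul_of_mem_rowStochastic hM]

lemma exists_sub_mulVec_eq (hM : M ∈ rowStochastic ℝ ι) (hirr : ∀ a b, ∃ n, 0 < (M ^ n) a b)
    {π : ι → ℝ} (hπ : π ᵥ* M = π) (hπ0 : π ≠ 0) {u : ι → ℝ} (hu : π ⬝ᵥ u = 0) :
    ∃ g : ι → ℝ, g - M *ᵥ g = u := by
  obtain ⟨a, -⟩ := Function.ne_iff.1 hπ0
  have : Nonempty ι := ⟨a⟩
  set L := mulVecLin (1 - M)
  set φ := dotProductEquiv ℝ ι π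
  have hL := LinearMap.finrank_range_add_finrank_ker L
  rw [ker_mulVecLin_one_sub hM hirr, finrank_span_singleton one_ne_zero,
    Module.finrank_fintype_fun_eq_card] at hL
  have hle : LinearMap.range L ≤ LinearMap.ker φ := by
    rintro _ ⟨g, rfl⟩
    simp [L, φ, dotProduct_sub, dotProduct_mulVec, hπ]
  have hne : LinearMap.ker φ ≠ ⊤ := fun h =>
    hπ0 <| (dotProductEquiv ℝ ι).map_eq_zero_iff.1 (LinearMap.ker_eq_top.1 h)
  have hφ := Submodule.finrank_lt hne
  rw [Module.finrank_fintype_fun_eq_card] at hφ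
  have heq := Submodule.eq_of_le_of_finrank_le hle (by omega)
  obtain ⟨g, hg⟩ := (heq ▸ hu : u ∈ LinearMap.range L)
  exact ⟨g, by simpa [L, sub_mulVec] using hg⟩

end StochasticMatrix

section RealAnalysis

open Filter Topology

lemma exists_lt_one_mul_le {ι : Type*} [Finite ι] {f h : ι → ℝ} (hh : ∀ j, 0 < h j)
    (hf : ∀ j, f j < h j) : ∃ r, 0 ≤ r ∧ r < 1 ∧ ∀ j, f j ≤ r * h j := by
  rcases isEmpty_or_nonempty ι with hι | hι
  · exact ⟨0, le_rfl, zero_lt_one, fun j => (IsEmpty.false j).elim⟩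
  obtain ⟨j₀, hj₀⟩ := Finite.exists_max fun j => f j / h j
  refine ⟨max 0 (f j₀ / h j₀), le_max_left _ _,
    max_lt zero_lt_one ((div_lt_one (hh j₀)).2 (hf j₀)), fun j => ?_⟩
  rw [← div_le_iff₀ (hh j)]
  exact (hj₀ j).trans (le_max_right _ _)

lemma eventually_lt_of_hasDerivAt_neg {f : ℝ → ℝ} {f' x : ℝ} (hf : HasDerivAt f f' x)
    (hf' : f' < 0) : ∀ᶠ t in 𝓝[>] x, f t < f x := by
  have hslope := (hasDerivAt_iff_tendsto_slope.1 hf).eventually (gt_mem_nhds hf')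
  filter_upwards [nhdsGT_le_nhdsNE x hslope, self_mem_nhdsWithin] with t ht (hxt : x < t)
  rw [slope_def_field] at ht
  by_contra! h
  exact ht.not_ge (div_nonneg (sub_nonneg.2 h) (sub_nonneg.2 hxt.le))

lemma hasDerivAt_mul_exp_mul (c w : ℝ) :
    HasDerivAt (fun t => c * Real.exp (t * w)) (c * w) 0 := by
  simpa using (((hasDerivAt_id (0 : ℝ)).mul_const w).exp).const_mul c

lemma limsup_div_le_of_linear_bounds {v : ℕ → ℝ} {a b C ρ : ℝ}
    (hlow : ∀ k : ℕ, a + k * b ≤ v k) (hup : ∀ k : ℕ, v k ≤ C - k * ρ) :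
    limsup (fun k : ℕ => v k / k) atTop ≤ -ρ := by
  have hdiv : ∀ {a b : ℝ}, Tendsto (fun k : ℕ => a / k + b) atTop (𝓝 b) := fun {a b} => by
    simpa using (tendsto_const_div_atTop_nhds_zero_nat a).add_const b
  have hcob : IsCoboundedUnder (· ≤ ·) atTop fun k : ℕ => v k / k := by
    refine isCoboundedUnder_le_of_eventually_le atTop (x := b - 1) ?_
    filter_upwards [(hdiv (a := a)).eventually (lt_mem_nhds (sub_one_lt b)),
      eventually_gt_atTop 0] with k hk hk0
    have hk0 : (0 : ℝ) < k := Nat.cast_pos.2 hk0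
    rw [le_div_iff₀ hk0]
    rw [div_add' _ _ _ hk0.ne', lt_div_iff₀ hk0] at hk
    linarith [hlow k]
  have hev : (fun k : ℕ => v k / k) ≤ᶠ[atTop] fun k : ℕ => C / k + -ρ := by
    filter_upwards [eventually_gt_atTop 0] with k hk0
    have hk0 : (0 : ℝ) < k := Nat.cast_pos.2 hk0
    rw [div_add' _ _ _ hk0.ne']
    exact div_le_div_of_nonneg_right (by linarith [hup k]) hk0.le
  calc limsup (fun k : ℕ => v k / k) atTop ≤ limsup (fun k : ℕ => C / k + -ρ) atTop :=
        limsup_le_limsup hev hcob hdiv.isBoundedUnder_le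
    _ = -ρ := hdiv.limsup_eq

lemma limsup_div_le_neg_sSup {v : ℕ → ℝ} {a b : ℝ} {S : Set ℝ}
    (hlow : ∀ k : ℕ, a + k * b ≤ v k) (hS : S.Nonempty)
    (hup : ∀ ρ ∈ S, ∃ C, ∀ k : ℕ, v k ≤ C - k * ρ) :
    limsup (fun k : ℕ => v k / k) atTop ≤ -sSup S := by
  refine le_neg_of_le_neg (csSup_le hS fun ρ hρ => le_neg_of_le_neg ?_)
  obtain ⟨C, hC⟩ := hup ρ hρ
  exact limsup_div_le_of_linear_bounds hlow hC

lemma add_mul_log_le_log_toReal {δ₁ δ : NNReal} (hδ₁ : 0 < δ₁) (hδ : 0 < δ) {q : ℝ≥0∞}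
    (hq : q ≠ ⊤) {k : ℕ} (h : (δ₁ : ℝ≥0∞) * (δ : ℝ≥0∞) ^ k ≤ q) :
    Real.log δ₁ + k * Real.log δ ≤ Real.log q.toReal := by
  have h' : (δ₁ : ℝ) * (δ : ℝ) ^ k ≤ q.toReal := by
    simpa using ENNReal.toReal_mono hq h
  calc Real.log δ₁ + k * Real.log δ = Real.log ((δ₁ : ℝ) * (δ : ℝ) ^ k) := by
        rw [Real.log_mul (by positivity) (by positivity), Real.log_pow]
    _ ≤ Real.log q.toReal := Real.log_le_log (by positivity) h'

lemma ne_top_of_ofReal_exp_mul_le {t : ℝ} {q M : ℝ≥0∞} (hM : M ≠ ⊤)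
    (h : ENNReal.ofReal (Real.exp t) * q ≤ M) : q ≠ ⊤ := fun hq =>
  hM <| top_le_iff.1 <| h.trans' (ENNReal.mul_eq_top.2 (Or.inl ⟨by simp [Real.exp_pos], hq⟩)).ge

lemma log_toReal_le_of_ofReal_exp_mul_le {t : ℝ} {q M : ℝ≥0∞} (hq : q ≠ 0) (hM : M ≠ ⊤)
    (h : ENNReal.ofReal (Real.exp t) * q ≤ M) :
    Real.log q.toReal ≤ Real.log M.toReal - t := by
  have h' : Real.exp t * q.toReal ≤ M.toReal := by
    simpa [ENNReal.toReal_mul, (Real.exp_pos t).le] using ENNReal.toReal_mono hM h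
  have hq0 : 0 < q.toReal := ENNReal.toReal_pos hq (ne_top_of_ofReal_exp_mul_le hM h)
  have := Real.log_le_log (by positivity) h'
  rw [Real.log_mul (Real.exp_pos t).ne' hq0.ne', Real.log_exp] at this
  linarith

end RealAnalysis

section RandomWalk

open Matrix

variable (A : ℤ → ℤ → Matrix (Fin s₀) (Fin s₀) ℝ)

def shift (v : ℕ × ℕ) (y : ℕ × ℕ × Fin s₀) : ℕ × ℕ × Fin s₀ :=
  (v.1 + y.1, v.2 + y.2.1, y.2.2)

lemma shift_injective (v : ℕ × ℕ) : (shift (s₀ := s₀) v).Injective := by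
  rintro ⟨a, b, c⟩ ⟨a', b', c'⟩ h
  simp_all [shift]

lemma shift_shift (u v : ℕ × ℕ) (y : ℕ × ℕ × Fin s₀) :
    shift u (shift v y) = shift (u + v) y := by
  simp [shift, add_assoc]

lemma kerPlus_shift (v : ℕ × ℕ) (y y' : ℕ × ℕ × Fin s₀) :
    kerPlus A (shift v y) (shift v y') = kerPlus A y y' := by
  simp [kerPlus, shift]

lemma pow_le_kpow_kerPlus_shift {n : ℕ} {y : ℕ × ℕ × Fin s₀} {v : ℕ × ℕ} {δ : ℝ≥0∞}
    (h : δ ≤ kpow (kerPlus A) n y (shift v y)) (k : ℕ) :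
    δ ^ k ≤ kpow (kerPlus A) (k * n) y (shift (k • v) y) := by
  induction k with
  | zero => simp [kpow, shift]
  | succ k ih =>
    have hstep : δ ≤ kpow (kerPlus A) n (shift (k • v) y) (shift ((k + 1) • v) y) := by
      rw [succ_nsmul, ← shift_shift]
      exact h.trans <| kpow_le_kpow_of_injective _ (shift_injective _)
        (fun i j => (kerPlus_shift A _ i j).ge) n _ _
    calc δ ^ (k + 1) = δ ^ k * δ := pow_succ δ k
      _ ≤ _ := mul_le_mul' ih hstep
      _ ≤ _ := kpow_mul_le _ _ _ _ _ _
      _ = _ := by rw [Nat.succ_mul]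

lemma exists_mul_pow_le_occ (h3 : Assumption3 A) (y z : ℕ × ℕ × Fin s₀) (c : ℕ × ℕ) :
    ∃ δ₁ δ : NNReal, 0 < δ₁ ∧ 0 < δ ∧ ∀ k : ℕ,
      (δ₁ : ℝ≥0∞) * (δ : ℝ≥0∞) ^ k ≤ occ A y (k * c.1 + z.1, k * c.2 + z.2.1, z.2.2) := by
  obtain ⟨n₁, -, h₁⟩ := h3 y z
  obtain ⟨n, -, h⟩ := h3 z (shift c z)
  obtain ⟨δ₁, hδ₁, hδ₁le⟩ := ENNReal.lt_iff_exists_nnreal_btwn.1 h₁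
  obtain ⟨δ, hδ, hδle⟩ := ENNReal.lt_iff_exists_nnreal_btwn.1 h
  refine ⟨δ₁, δ, ENNReal.coe_pos.1 hδ₁, ENNReal.coe_pos.1 hδ, fun k => ?_⟩
  calc (δ₁ : ℝ≥0∞) * (δ : ℝ≥0∞) ^ k
      ≤ kpow (kerPlus A) n₁ y z * kpow (kerPlus A) (k * n) z (shift (k • c) z) :=
        mul_le_mul' hδ₁le.le (pow_le_kpow_kerPlus_shift A hδle.le k)
    _ ≤ kpow (kerPlus A) (n₁ + k * n) y (shift (k • c) z) := kpow_mul_le _ _ _ _ _ _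
    _ ≤ occ A y (shift (k • c) z) := ENNReal.le_tsum _

lemma tsum_ker_mul (hA : IsMMRW A) (y : ℤ × ℤ × Fin s₀) (g : ℤ × ℤ × Fin s₀ → ℝ≥0∞) :
    ∑' z, ker A y z * g z =
      ∑ i ∈ Finset.Icc (-1 : ℤ) 1, ∑ k ∈ Finset.Icc (-1 : ℤ) 1, ∑ b,
        ENNReal.ofReal (A i k y.2.2 b) * g (y.1 + i, y.2.1 + k, b) := by
  obtain ⟨y₁, y₂, j⟩ := y
  let e := (Equiv.addLeft y₁).prodCongr ((Equiv.addLeft y₂).prodCongr (Equiv.refl (Fin s₀)))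
  rw [← e.tsum_eq, tsum_eq_sum (s := Finset.Icc (-1 : ℤ) 1 ×ˢ Finset.Icc (-1 : ℤ) 1 ×ˢ .univ)]
  · simp [e, ker, Finset.sum_product]
  · rintro ⟨i, k, b⟩ hz
    simp only [Finset.mem_product, Finset.mem_univ, and_true, not_and_or] at hz
    simp [e, ker, hA.skipfree i k hz]

lemma Ass_apply (θ₁ θ₂ : ℝ) (a b : Fin s₀) :
    Ass A θ₁ θ₂ a b = ∑ i ∈ Finset.Icc (-1 : ℤ) 1, ∑ k ∈ Finset.Icc (-1 : ℤ) 1,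
      Real.exp (i * θ₁ + k * θ₂) * A i k a b := by
  simp [Ass, Matrix.sum_apply]

lemma Ass_nonneg (hA : IsMMRW A) (θ₁ θ₂ : ℝ) (a b : Fin s₀) : 0 ≤ Ass A θ₁ θ₂ a b := by
  rw [Ass_apply]
  exact Finset.sum_nonneg fun i _ => Finset.sum_nonneg fun k _ =>
    mul_nonneg (Real.exp_pos _).le (hA.nonneg i k a b)

lemma ofReal_Ass_apply (hA : IsMMRW A) (θ₁ θ₂ : ℝ) (a b : Fin s₀) :
    ENNReal.ofReal (Ass A θ₁ θ₂ a b) = ∑ i ∈ Finset.Icc (-1 : ℤ) 1, ∑ k ∈ Finset.Icc (-1 : ℤ) 1,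
      ENNReal.ofReal (Real.exp (i * θ₁ + k * θ₂)) * ENNReal.ofReal (A i k a b) := by
  have hnn : ∀ i k : ℤ, 0 ≤ Real.exp (i * θ₁ + k * θ₂) * A i k a b :=
    fun i k => mul_nonneg (Real.exp_pos _).le (hA.nonneg i k a b)
  rw [Ass_apply, ENNReal.ofReal_sum_of_nonneg fun i _ => Finset.sum_nonneg fun k _ => hnn i k]
  refine Finset.sum_congr rfl fun i _ => ?_
  rw [ENNReal.ofReal_sum_of_nonneg fun k _ => hnn i k]
  exact Finset.sum_congr rfl fun k _ => ENNReal.ofReal_mul (Real.exp_pos _).le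

lemma Ass_mulVec_apply (θ₁ θ₂ : ℝ) (h : Fin s₀ → ℝ) (j : Fin s₀) :
    (Ass A θ₁ θ₂ *ᵥ h) j = ∑ i ∈ Finset.Icc (-1 : ℤ) 1, ∑ k ∈ Finset.Icc (-1 : ℤ) 1,
      ∑ b, Real.exp (i * θ₁ + k * θ₂) * A i k j b * h b := by
  simp only [mulVec, dotProduct, Ass_apply, Finset.sum_mul]
  rw [Finset.sum_comm]
  exact Finset.sum_congr rfl fun i _ => Finset.sum_comm

lemma tsum_ker_mul_exp (hA : IsMMRW A) (θ₁ θ₂ : ℝ) (g : Fin s₀ → ℝ≥0∞)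
    (y : ℤ × ℤ × Fin s₀) :
    ∑' z, ker A y z * (ENNReal.ofReal (Real.exp (z.1 * θ₁ + z.2.1 * θ₂)) * g z.2.2) =
      ENNReal.ofReal (Real.exp (y.1 * θ₁ + y.2.1 * θ₂)) *
        ∑ b, ENNReal.ofReal (Ass A θ₁ θ₂ y.2.2 b) * g b := by
  have hexp : ∀ i k : ℤ, ENNReal.ofReal (Real.exp (↑(y.1 + i) * θ₁ + ↑(y.2.1 + k) * θ₂)) =
      ENNReal.ofReal (Real.exp (y.1 * θ₁ + y.2.1 * θ₂)) *
        ENNReal.ofReal (Real.exp (i * θ₁ + k * θ₂)) := fun i k => by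
    rw [← ENNReal.ofReal_mul (Real.exp_pos _).le, ← Real.exp_add]
    push_cast; ring_nf
  simp only [tsum_ker_mul A hA, hexp, ofReal_Ass_apply A hA, Finset.mul_sum, Finset.sum_mul]
  refine (Finset.sum_congr rfl fun i _ => Finset.sum_comm).trans (Finset.sum_comm.trans ?_)
  exact Finset.sum_congr rfl fun b _ => Finset.sum_congr rfl fun i _ =>
    Finset.sum_congr rfl fun k _ => by ring

lemma Ass_zero_mem_rowStochastic (hA : IsMMRW A) : Ass A 0 0 ∈ rowStochastic ℝ (Fin s₀) := by
  refine mem_rowStochastic_iff_sum.2 ⟨fun a b => ?_, fun a => ?_⟩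
  · simp only [Ass_apply, mul_zero, add_zero, Real.exp_zero, one_mul]
    exact Finset.sum_nonneg fun i _ => Finset.sum_nonneg fun k _ => hA.nonneg i k a b
  · simp only [Ass_apply, mul_zero, add_zero, Real.exp_zero, one_mul]
    rw [Finset.sum_comm, ← hA.stochastic a]
    exact Finset.sum_congr rfl fun i _ => Finset.sum_comm

lemma kpow_ker_le_ofReal_pow (hA : IsMMRW A) (n : ℕ) (y y' : ℤ × ℤ × Fin s₀) :
    kpow (ker A) n y y' ≤ ENNReal.ofReal ((Ass A 0 0 ^ n) y.2.2 y'.2.2) := by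
  have hM := Ass_zero_mem_rowStochastic A hA
  induction n generalizing y with
  | zero => by_cases h : y = y' <;> simp [kpow, h]
  | succ n ih =>
    calc kpow (ker A) (n + 1) y y'
        ≤ ∑' z, ker A y z * (ENNReal.ofReal (Real.exp (z.1 * 0 + z.2.1 * 0)) *
            ENNReal.ofReal ((Ass A 0 0 ^ n) z.2.2 y'.2.2)) :=
          ENNReal.tsum_le_tsum fun z => by simpa using mul_le_mul' le_rfl (ih z)
      _ = ENNReal.ofReal ((Ass A 0 0 ^ (n + 1)) y.2.2 y'.2.2) := by
          rw [tsum_ker_mul_exp A hA 0 0 fun b => ENNReal.ofReal ((Ass A 0 0 ^ n) b y'.2.2),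
            pow_succ', mul_apply, ENNReal.ofReal_sum_of_nonneg fun b _ => mul_nonneg
              (nonneg_of_mem_rowStochastic hM) (nonneg_of_mem_rowStochastic (pow_mem hM n))]
          simp [ENNReal.ofReal_mul (nonneg_of_mem_rowStochastic hM)]

lemma Ass_zero_pow_pos (hA : IsMMRW A) (h1 : Assumption1 A) (a b : Fin s₀) :
    ∃ n, 0 < (Ass A 0 0 ^ n) a b := by
  obtain ⟨N, hN⟩ := h1 (0, 0, a) (0, 0, b)
  exact ⟨N, ENNReal.ofReal_pos.1 ((hN N le_rfl).trans_le (kpow_ker_le_ofReal_pow A hA N _ _))⟩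

lemma Icc_neg_one_one : Finset.Icc (-1 : ℤ) 1 = {-1, 0, 1} := by decide

noncomputable def drift (v : ℝ × ℝ) (a : Fin s₀) : ℝ :=
  ∑ i ∈ Finset.Icc (-1 : ℤ) 1, ∑ k ∈ Finset.Icc (-1 : ℤ) 1, ∑ b, (i * v.1 + k * v.2) * A i k a b

lemma dotProduct_drift_one_zero (π : Fin s₀ → ℝ) : π ⬝ᵥ drift A (1, 0) = a1 A π := by
  refine Finset.sum_congr rfl fun a _ => congrArg (π a * ·) ?_
  rw [Finset.sum_comm]
  simp [drift, Icc_neg_one_one, Finset.sum_sub_distrib, Finset.sum_add_distrib]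
  ring

lemma dotProduct_drift_zero_one (π : Fin s₀ → ℝ) : π ⬝ᵥ drift A (0, 1) = a2 A π := by
  refine Finset.sum_congr rfl fun a _ => congrArg (π a * ·) ?_
  rw [Finset.sum_comm]
  simp [drift, Icc_neg_one_one, Finset.sum_sub_distrib, Finset.sum_add_distrib]
  ring

lemma exists_Ass_mulVec_lt_of_drift (hA : IsMMRW A) (h1 : Assumption1 A) {π : Fin s₀ → ℝ}
    (hπ : IsStationary A π) {v : ℝ × ℝ} (hv : π ⬝ᵥ drift A v < 0) :
    ∃ θ : ℝ × ℝ, ∃ h : Fin s₀ → ℝ, (∀ b, 0 < h b) ∧ ∀ j, (Ass A θ.1 θ.2 *ᵥ h) j < h j := by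
  set M := Ass A 0 0
  have hM := Ass_zero_mem_rowStochastic A hA
  have hπM : π ᵥ* M = π := funext fun b => by
    simpa [M, vecMul, dotProduct, Ass_apply] using hπ.2.2 b
  have hπ0 : π ≠ 0 := fun h => by simpa [h] using hπ.2.1
  set abar := π ⬝ᵥ drift A v
  obtain ⟨g, hg⟩ := exists_sub_mulVec_eq hM (Ass_zero_pow_pos A hA h1) hπM hπ0
    (u := drift A v - abar • 1) (by simp [dotProduct_sub, abar, dotProduct_one, hπ.2.1])
  -- `F j t = (A_{*,*}(t v) e^{t g})_j - e^{t g_j}`; as `g` solves the Poisson equation for the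
  -- drift, every `F j` has slope `abar < 0` at `t = 0`.
  set F : Fin s₀ → ℝ → ℝ := fun j t => ∑ i ∈ Finset.Icc (-1 : ℤ) 1, ∑ k ∈ Finset.Icc (-1 : ℤ) 1,
      ∑ b, A i k j b * Real.exp (t * (i * v.1 + k * v.2 + g b)) - Real.exp (t * g j)
  have hF0 : ∀ j, F j 0 = 0 := fun j => by simp [F, hA.stochastic j]
  have hF' : ∀ j, HasDerivAt (F j) abar 0 := fun j => by
    have hd : HasDerivAt (F j) (∑ i ∈ Finset.Icc (-1 : ℤ) 1, ∑ k ∈ Finset.Icc (-1 : ℤ) 1,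
        ∑ b, A i k j b * (i * v.1 + k * v.2 + g b) - g j) 0 :=
      (HasDerivAt.fun_sum fun i _ => HasDerivAt.fun_sum fun k _ => HasDerivAt.fun_sum fun b _ =>
        hasDerivAt_mul_exp_mul (A i k j b) (i * v.1 + k * v.2 + g b)).fun_sub
        (by simpa using hasDerivAt_mul_exp_mul 1 (g j))
    refine hd.congr_deriv ?_
    have hsplit : ∑ i ∈ Finset.Icc (-1 : ℤ) 1, ∑ k ∈ Finset.Icc (-1 : ℤ) 1,
        ∑ b, A i k j b * (i * v.1 + k * v.2 + g b) = drift A v j + (M *ᵥ g) j := by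
      simp only [drift, M, Ass_mulVec_apply, mul_zero, add_zero, Real.exp_zero, one_mul,
        ← Finset.sum_add_distrib]
      exact Finset.sum_congr rfl fun i _ => Finset.sum_congr rfl fun k _ =>
        Finset.sum_congr rfl fun b _ => by ring
    have hgj := congrFun hg j
    simp only [Pi.sub_apply, Pi.smul_apply, Pi.one_apply, smul_eq_mul, mul_one] at hgj
    linarith
  obtain ⟨t, ht⟩ :=
    (Filter.eventually_all.2 fun j => eventually_lt_of_hasDerivAt_neg (hF' j) hv).exists
  refine ⟨(t * v.1, t * v.2), fun b => Real.exp (t * g b), fun b => Real.exp_pos _, fun j => ?_⟩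
  have := ht j
  rw [hF0, sub_neg] at this
  convert this using 1
  rw [Ass_mulVec_apply]
  exact Finset.sum_congr rfl fun i _ => Finset.sum_congr rfl fun k _ =>
    Finset.sum_congr rfl fun b _ => by
      rw [mul_right_comm, ← Real.exp_add, mul_comm]; congr 2; ring

lemma exists_Ass_mulVec_le (hA : IsMMRW A) (h1 : Assumption1 A) (h2 : Assumption2 A) :
    ∃ θ : ℝ × ℝ, ∃ h : Fin s₀ → ℝ, ∃ r, (∀ b, 0 < h b) ∧ 0 ≤ r ∧ r < 1 ∧
      ∀ j, (Ass A θ.1 θ.2 *ᵥ h) j ≤ r * h j := by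
  obtain ⟨π, hπ, hdrift⟩ := h2
  obtain ⟨θ, h, hh, hlt⟩ : ∃ θ : ℝ × ℝ, ∃ h : Fin s₀ → ℝ, (∀ b, 0 < h b) ∧
      ∀ j, (Ass A θ.1 θ.2 *ᵥ h) j < h j := by
    rcases hdrift with ha | ha
    · exact exists_Ass_mulVec_lt_of_drift A hA h1 hπ (dotProduct_drift_one_zero A π ▸ ha)
    · exact exists_Ass_mulVec_lt_of_drift A hA h1 hπ (dotProduct_drift_zero_one A π ▸ ha)
  obtain ⟨r, hr0, hr1, hr⟩ := exists_lt_one_mul_le hh hlt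
  exact ⟨θ, h, r, hh, hr0, hr1, hr⟩

noncomputable def expWeight (θ : ℝ × ℝ) (h : Fin s₀ → ℝ) (z : ℕ × ℕ × Fin s₀) : ℝ≥0∞ :=
  ENNReal.ofReal (Real.exp (z.1 * θ.1 + z.2.1 * θ.2)) * ENNReal.ofReal (h z.2.2)

lemma tsum_kerPlus_mul_expWeight_le (hA : IsMMRW A) {θ : ℝ × ℝ} {h : Fin s₀ → ℝ} {r : ℝ}
    (hh : ∀ b, 0 ≤ h b) (hr : 0 ≤ r) (hLyap : ∀ j, (Ass A θ.1 θ.2 *ᵥ h) j ≤ r * h j)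
    (y : ℕ × ℕ × Fin s₀) :
    ∑' z, kerPlus A y z * expWeight θ h z ≤ ENNReal.ofReal r * expWeight θ h y := by
  let ι : ℕ × ℕ × Fin s₀ → ℤ × ℤ × Fin s₀ := fun z => (z.1, z.2.1, z.2.2)
  have hι : ι.Injective := fun z z' hz => by simpa [ι, Prod.ext_iff] using hz
  let W : ℤ × ℤ × Fin s₀ → ℝ≥0∞ := fun z =>
    ENNReal.ofReal (Real.exp (z.1 * θ.1 + z.2.1 * θ.2)) * ENNReal.ofReal (h z.2.2)
  calc ∑' z, kerPlus A y z * W (ι z) ≤ ∑' w, ker A (ι y) w * W w :=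
        ENNReal.tsum_comp_le_tsum_of_injective hι fun w => ker A (ι y) w * W w
    _ = ENNReal.ofReal (Real.exp (y.1 * θ.1 + y.2.1 * θ.2)) *
          ENNReal.ofReal ((Ass A θ.1 θ.2 *ᵥ h) y.2.2) := by
        rw [tsum_ker_mul_exp A hA θ.1 θ.2 (fun b => ENNReal.ofReal (h b)), mulVec, dotProduct,
          ENNReal.ofReal_sum_of_nonneg fun b _ => mul_nonneg (Ass_nonneg A hA _ _ _ _) (hh b)]
        simp [ι, ENNReal.ofReal_mul (Ass_nonneg A hA _ _ _ _)]
    _ ≤ ENNReal.ofReal (Real.exp (y.1 * θ.1 + y.2.1 * θ.2)) * ENNReal.ofReal (r * h y.2.2) :=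
        mul_le_mul' le_rfl (ENNReal.ofReal_le_ofReal (hLyap _))
    _ = ENNReal.ofReal r * expWeight θ h y := by
        rw [expWeight, ENNReal.ofReal_mul hr]; ring

lemma ofReal_exp_mul_occ_le_Phi (x : ℕ × ℕ) (θ : ℝ × ℝ) (j j' : Fin s₀) (k₁ k₂ : ℕ) :
    ENNReal.ofReal (Real.exp (k₁ * θ.1 + k₂ * θ.2)) * occ A (x.1, x.2, j) (k₁, k₂, j') ≤
      Phi A x θ j j' :=
  ENNReal.le_tsum (f := fun k : ℕ × ℕ => ENNReal.ofReal (Real.exp (k.1 * θ.1 + k.2 * θ.2)) *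
    occ A (x.1, x.2, j) (k.1, k.2, j')) (k₁, k₂)

lemma Phi_ne_top_of_le (hA : IsMMRW A) {θ : ℝ × ℝ} {h : Fin s₀ → ℝ} {r : ℝ}
    (hh : ∀ b, 0 < h b) (hr0 : 0 ≤ r) (hr1 : r < 1)
    (hLyap : ∀ j, (Ass A θ.1 θ.2 *ᵥ h) j ≤ r * h j) {θ' : ℝ × ℝ} (h₁ : θ'.1 ≤ θ.1)
    (h₂ : θ'.2 ≤ θ.2) (x : ℕ × ℕ) (j j' : Fin s₀) : Phi A x θ' j j' ≠ ⊤ := by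
  have hbound : Phi A x θ' j j' * ENNReal.ofReal (h j') ≤
      (1 - ENNReal.ofReal r)⁻¹ * expWeight θ h (x.1, x.2, j) :=
    calc Phi A x θ' j j' * ENNReal.ofReal (h j')
        ≤ ∑' k : ℕ × ℕ, occ A (x.1, x.2, j) (k.1, k.2, j') * expWeight θ h (k.1, k.2, j') := by
          rw [Phi, ← ENNReal.tsum_mul_right]
          refine ENNReal.tsum_le_tsum fun k => ?_
          rw [expWeight, mul_comm _ (occ A _ _), mul_assoc]
          refine mul_le_mul' le_rfl (mul_le_mul' (ENNReal.ofReal_le_ofReal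
            (Real.exp_le_exp.2 ?_)) le_rfl)
          exact add_le_add (mul_le_mul_of_nonneg_left h₁ k.1.cast_nonneg)
            (mul_le_mul_of_nonneg_left h₂ k.2.cast_nonneg)
      _ ≤ ∑' z, occ A (x.1, x.2, j) z * expWeight θ h z :=
          ENNReal.tsum_comp_le_tsum_of_injective (fun k k' hk => by simpa [Prod.ext_iff] using hk)
            fun z => occ A (x.1, x.2, j) z * expWeight θ h z
      _ ≤ (1 - ENNReal.ofReal r)⁻¹ * expWeight θ h (x.1, x.2, j) :=
          tsum_tsum_kpow_mul_le _
            (tsum_kerPlus_mul_expWeight_le A hA (fun b => (hh b).le) hr0 hLyap) _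
  have hfin : (1 - ENNReal.ofReal r)⁻¹ * expWeight θ h (x.1, x.2, j) ≠ ⊤ :=
    ENNReal.mul_ne_top (ENNReal.inv_ne_top.2 (tsub_pos_of_lt (ENNReal.ofReal_lt_one.2 hr1)).ne')
      (ENNReal.mul_ne_top ENNReal.ofReal_ne_top ENNReal.ofReal_ne_top)
  intro htop
  rw [htop, ENNReal.top_mul (ENNReal.ofReal_pos.2 (hh j')).ne'] at hbound
  exact hfin (top_le_iff.1 hbound)

lemma domPhi_nonempty (hA : IsMMRW A) (h1 : Assumption1 A) (h2 : Assumption2 A) (x : ℕ × ℕ) :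
    (domPhi A x).Nonempty := by
  obtain ⟨θ, h, r, hh, hr0, hr1, hLyap⟩ := exists_Ass_mulVec_le A hA h1 h2
  refine ⟨(θ.1 - 1, θ.2 - 1), mem_interior.2 ⟨Set.Iio θ.1 ×ˢ Set.Iio θ.2,
    fun θ' hθ' j j' => ?_, isOpen_Iio.prod isOpen_Iio, by simp⟩⟩
  exact Phi_ne_top_of_le A hA hh hr0 hr1 hLyap hθ'.1.le hθ'.2.le x j j'

end RandomWalk

theorem occ_limsup_upper_bound_general {s₀ : ℕ}
    (A : ℤ → ℤ → Matrix (Fin s₀) (Fin s₀) ℝ) (hA : IsMMRW A)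
    (h1 : Assumption1 A) (h2 : Assumption2 A) (h3 : Assumption3 A)
    (c : ℕ × ℕ) (x : ℕ × ℕ) (j j' : Fin s₀) (l₁ l₂ : ℕ) :
    Filter.limsup (fun k : ℕ =>
        Real.log ((occ A (x.1, x.2, j) (k * c.1 + l₁, k * c.2 + l₂, j')).toReal) / (k : ℝ))
      Filter.atTop
    ≤ - sSup ((fun θ : ℝ × ℝ => θ.1 * (c.1 : ℝ) + θ.2 * (c.2 : ℝ)) '' domPhi A x) := by
  set q : ℕ → ℝ≥0∞ := fun k => occ A (x.1, x.2, j) (k * c.1 + l₁, k * c.2 + l₂, j')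
  have hPhi : ∀ θ ∈ domPhi A x, ∀ k : ℕ,
      ENNReal.ofReal (Real.exp (k * (θ.1 * c.1 + θ.2 * c.2) + (l₁ * θ.1 + l₂ * θ.2))) * q k ≤
        Phi A x θ j j' := fun θ _ k => by
    convert ofReal_exp_mul_occ_le_Phi A x θ j j' (k * c.1 + l₁) (k * c.2 + l₂) using 4
    push_cast; ring
  obtain ⟨δ₁, δ, hδ₁, hδ, hlow⟩ := exists_mul_pow_le_occ A h3 (x.1, x.2, j) (l₁, l₂, j') c
  have hq0 : ∀ k, q k ≠ 0 := fun k => (lt_of_lt_of_le (by positivity) (hlow k)).ne'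
  obtain ⟨θ₀, hθ₀⟩ := domPhi_nonempty A hA h1 h2 x
  have hq : ∀ k, q k ≠ ⊤ := fun k =>
    ne_top_of_ofReal_exp_mul_le (interior_subset hθ₀ j j') (hPhi θ₀ hθ₀ k)
  refine limsup_div_le_neg_sSup (fun k => add_mul_log_le_log_toReal hδ₁ hδ (hq k) (hlow k))
    ⟨_, Set.mem_image_of_mem _ hθ₀⟩ ?_
  rintro _ ⟨θ, hθ, rfl⟩
  refine ⟨Real.log (Phi A x θ j j').toReal - (l₁ * θ.1 + l₂ * θ.2), fun k => ?_⟩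
  linarith [log_toReal_le_of_ofReal_exp_mul_le (hq0 k) (interior_subset hθ j j') (hPhi θ hθ k)]

/-- Proposition 2.4: under Assumptions 1, 2 and 3, for any
`c = (c₁,c₂) ∈ ℤ₊²` with `c ≠ 0`, every `(x,j) ∈ 𝕊₊`, `j' ∈ S₀` and `l₁,l₂ ∈ ℤ₊`,
`limsup_{k→∞} (1/k) log q̃_{(x,j),(kc₁+l₁,kc₂+l₂,j')} ≤ − sup_{θ∈𝒟_x} ⟨θ,c⟩`. -/
theorem occ_limsup_upper_bound {s₀ : ℕ} (hs : 0 < s₀)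
    (A : ℤ → ℤ → Matrix (Fin s₀) (Fin s₀) ℝ) (hA : IsMMRW A)
    (h1 : Assumption1 A) (h2 : Assumption2 A) (h3 : Assumption3 A)
    (c : ℕ × ℕ) (hc : c ≠ (0, 0)) (x : ℕ × ℕ) (j j' : Fin s₀) (l₁ l₂ : ℕ) :
    Filter.limsup (fun k : ℕ =>
        Real.log ((occ A (x.1, x.2, j) (k * c.1 + l₁, k * c.2 + l₂, j')).toReal) / (k : ℝ))
      Filter.atTop
    ≤ - sSup ((fun θ : ℝ × ℝ => θ.1 * (c.1 : ℝ) + θ.2 * (c.2 : ℝ)) '' domPhi A x) :=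
  occ_limsup_upper_bound_general A hA h1 h2 h3 c x j j' l₁ l₂

end MMRW2d
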